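/- The integral (1/(2√π)) ∫₀¹ (−log x)·c(x)·(x(1−x))^{−3/2} dx equals √π/2, where c(x) = x²(3−2x). -/

import Mathlib

/-!
On `(0, 1)` the integrand is `-log x · h'(x)` with `h(x) = 2x√x / √(1 - x)`. Integrating by parts,
the boundary terms vanish and the integral becomes `∫₀¹ h(x) / x dx = 2 ∫₀¹ √(x / (1 - x)) dx = π`,
a primitive of `√(x / (1 - x))` being `arcsin √x - √x √(1 - x)`. This is packaged as the explicit
primitive `logCfunPrimitive`, which tends to `0` at `0⁺` and to `π` at `1⁻`; as the integrand is
nonnegative, the improper integral converges.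
-/

open Real

/-- The limiting split function `c(x) = x²(3-2x)`. -/
def cfun (x : ℝ) : ℝ := x ^ 2 * (3 - 2 * x)

open Set Filter Topology MeasureTheory

theorem integral_Ioo_of_hasDerivAt_of_nonneg {f f' : ℝ → ℝ} {a b fa fb : ℝ}
    (hab : a < b) (hderiv : ∀ x ∈ Ioo a b, HasDerivAt f (f' x) x)
    (hpos : ∀ x ∈ Ioo a b, 0 ≤ f' x)
    (ha : Tendsto f (𝓝[>] a) (𝓝 fa)) (hb : Tendsto f (𝓝[<] b) (𝓝 fb)) :
    ∫ x in Ioo a b, f' x = fb - fa := by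
  set F : ℝ → ℝ := Function.update (Function.update f a fa) b fb
  have hFf : EqOn F f (Ioo a b) := fun x hx => by
    simp only [F, Function.update_of_ne hx.2.ne, Function.update_of_ne hx.1.ne']
  have hFderiv : ∀ x ∈ Ioo a b, HasDerivAt F (f' x) x := fun x hx =>
    (hderiv x hx).congr_of_eventuallyEq (hFf.eventuallyEq_of_mem (Ioo_mem_nhds hx.1 hx.2))
  have hFcont : ContinuousOn F (Icc a b) := by
    rw [continuousOn_update_iff, continuousOn_update_iff, Icc_sdiff_right, Ico_sdiff_left]
    refine ⟨⟨fun z hz => (hderiv z hz).continuousAt.continuousWithinAt,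
      fun _ => ha.mono_left (nhdsWithin_mono _ Ioo_subset_Ioi_self)⟩, fun _ => ?_⟩
    refine (hb.congr' ?_).mono_left (nhdsWithin_mono _ Ico_subset_Iio_self)
    filter_upwards [Ioo_mem_nhdsLT hab] with _ hz using (Function.update_of_ne hz.1.ne' _ _).symm
  have hint : IntervalIntegrable f' volume a b :=
    (intervalIntegrable_iff_integrableOn_Ioc_of_le hab.le).2
      (intervalIntegral.integrableOn_deriv_of_nonneg hFcont hFderiv hpos)
  rw [← integral_Ioc_eq_integral_Ioo, ← intervalIntegral.integral_of_le hab.le]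
  exact intervalIntegral.integral_eq_sub_of_hasDerivAt_of_tendsto hab hderiv hint ha hb

theorem rpow_neg_three_halves {y : ℝ} (hy : 0 ≤ y) : y ^ (-(3 / 2) : ℝ) = (y * √y)⁻¹ := by
  rw [Real.rpow_neg hy, show (3 / 2 : ℝ) = 1 + 1 / 2 by norm_num, Real.rpow_add' hy (by norm_num),
    Real.rpow_one, ← Real.sqrt_eq_rpow]

theorem hasDerivAt_sqrt_one_sub {x : ℝ} (hx : x < 1) :
    HasDerivAt (fun y => √(1 - y)) (-(1 / (2 * √(1 - x)))) x := by
  simpa [Function.comp_def] using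
    (Real.hasDerivAt_sqrt (sub_pos.2 hx).ne').comp x ((hasDerivAt_id x).const_sub 1)

theorem hasDerivAt_arcsin_sqrt_sub {x : ℝ} (hx₀ : 0 < x) (hx₁ : x < 1) :
    HasDerivAt (fun y => arcsin √y - √y * √(1 - y)) (√x / √(1 - x)) x := by
  have hs : 0 < √x := Real.sqrt_pos.2 hx₀
  have ht : 0 < √(1 - x) := Real.sqrt_pos.2 (sub_pos.2 hx₁)
  have hsx : √x ^ 2 = x := Real.sq_sqrt hx₀.le
  have htx : √(1 - x) ^ 2 = 1 - x := Real.sq_sqrt (sub_pos.2 hx₁).le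
  have hsqrt := Real.hasDerivAt_sqrt hx₀.ne'
  have harcsin := (Real.hasDerivAt_arcsin (x := √x) (by linarith) (by
    rw [Ne, Real.sqrt_eq_one]; exact hx₁.ne)).comp x hsqrt
  refine (harcsin.sub (hsqrt.mul (hasDerivAt_sqrt_one_sub hx₁))).congr_deriv ?_
  rw [hsx]
  field_simp
  linear_combination -htx - hsx

theorem hasDerivAt_mul_sqrt_div_sqrt_one_sub {x : ℝ} (hx₀ : 0 < x) (hx₁ : x < 1) :
    HasDerivAt (fun y => y * √y / √(1 - y))
      ((3 - 2 * x) * √x / (2 * ((1 - x) * √(1 - x)))) x := by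
  have ht : 0 < √(1 - x) := Real.sqrt_pos.2 (sub_pos.2 hx₁)
  have hsx : √x ^ 2 = x := Real.sq_sqrt hx₀.le
  have htx : √(1 - x) ^ 2 = 1 - x := Real.sq_sqrt (sub_pos.2 hx₁).le
  have h1x : 1 - x ≠ 0 := (sub_pos.2 hx₁).ne'
  refine (((hasDerivAt_id x).mul (Real.hasDerivAt_sqrt hx₀.ne')).div
    (hasDerivAt_sqrt_one_sub hx₁) ht.ne').congr_deriv ?_
  simp only [Pi.mul_apply, id, one_mul]
  rw [htx]
  field_simp
  linear_combination (3 * x + 2 * √(1 - x) ^ 2 - 3) * hsx + 3 * x * htx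

noncomputable def logCfunPrimitive (x : ℝ) : ℝ :=
  2 * (arcsin √x - √x * √(1 - x)) - 2 * log x * (x * √x / √(1 - x))

theorem hasDerivAt_logCfunPrimitive {x : ℝ} (hx₀ : 0 < x) (hx₁ : x < 1) :
    HasDerivAt logCfunPrimitive ((-log x) * cfun x * (x * (1 - x)) ^ (-(3 / 2) : ℝ)) x := by
  have ht : 0 < √(1 - x) := Real.sqrt_pos.2 (sub_pos.2 hx₁)
  have hsx : √x ^ 2 = x := Real.sq_sqrt hx₀.le
  have h1x : 1 - x ≠ 0 := (sub_pos.2 hx₁).ne'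
  refine (((hasDerivAt_arcsin_sqrt_sub hx₀ hx₁).const_mul 2).sub
    (((Real.hasDerivAt_log hx₀.ne').const_mul 2).mul
      (hasDerivAt_mul_sqrt_div_sqrt_one_sub hx₀ hx₁))).congr_deriv ?_
  rw [rpow_neg_three_halves (mul_pos hx₀ (sub_pos.2 hx₁)).le, Real.sqrt_mul hx₀.le, cfun]
  field_simp
  linear_combination log x * (2 * x - 3) * hsx

theorem neg_log_mul_cfun_mul_rpow_nonneg {x : ℝ} (hx₀ : 0 < x) (hx₁ : x < 1) :
    0 ≤ (-log x) * cfun x * (x * (1 - x)) ^ (-(3 / 2) : ℝ) := by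
  have hlog : 0 ≤ -log x := neg_nonneg.2 (Real.log_nonpos hx₀.le hx₁.le)
  have hc : 0 ≤ cfun x := mul_nonneg (sq_nonneg x) (by linarith)
  have hr := Real.rpow_nonneg (mul_pos hx₀ (sub_pos.2 hx₁)).le (-(3 / 2) : ℝ)
  positivity

theorem tendsto_log_div_sqrt_one_sub_nhdsLT_one :
    Tendsto (fun x => log x / √(1 - x)) (𝓝[<] 1) (𝓝 0) := by
  have hslope : Tendsto (slope log 1) (𝓝[<] 1) (𝓝 1) := by
    have h := hasDerivAt_iff_tendsto_slope.1 (Real.hasDerivAt_log one_ne_zero)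
    rw [inv_one] at h
    exact h.mono_left (nhdsWithin_mono _ fun x hx => ne_of_lt (mem_Iio.1 hx))
  have hsqrt : Tendsto (fun x => √(1 - x)) (𝓝[<] 1) (𝓝 0) := by
    have hc : Continuous fun x : ℝ => √(1 - x) := by fun_prop
    simpa using (hc.continuousWithinAt (s := Iio 1) (x := 1)).tendsto
  have hlim : Tendsto (fun x => -(slope log 1 x * √(1 - x))) (𝓝[<] 1) (𝓝 0) := by
    simpa using (hslope.mul hsqrt).neg
  refine hlim.congr' ?_
  filter_upwards [self_mem_nhdsWithin] with x (hx : x < 1)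
  have htx : √(1 - x) ^ 2 = 1 - x := Real.sq_sqrt (sub_pos.2 hx).le
  have : x - 1 ≠ 0 := (sub_neg.2 hx).ne
  have : √(1 - x) ≠ 0 := (Real.sqrt_pos.2 (sub_pos.2 hx)).ne'
  rw [slope_def_field, log_one]
  field_simp
  linear_combination (-log x) * htx

theorem tendsto_logCfunPrimitive_nhdsGT_zero :
    Tendsto logCfunPrimitive (𝓝[>] 0) (𝓝 0) := by
  have harcsin : Tendsto (fun x => 2 * (arcsin √x - √x * √(1 - x))) (𝓝[>] 0) (𝓝 0) := by
    have hc : Continuous fun x => 2 * (arcsin √x - √x * √(1 - x)) := by fun_prop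
    simpa using (hc.continuousWithinAt (s := Ioi 0) (x := 0)).tendsto
  have hlog : Tendsto (fun x => log x * (x * √x)) (𝓝[>] 0) (𝓝 0) := by
    refine (tendsto_log_mul_rpow_nhdsGT_zero (r := 3 / 2) (by norm_num)).congr' ?_
    filter_upwards [self_mem_nhdsWithin] with x (hx : 0 < x)
    rw [show (3 / 2 : ℝ) = 1 + 1 / 2 by norm_num, Real.rpow_add hx, Real.rpow_one,
      ← Real.sqrt_eq_rpow]
  have hsqrt : Tendsto (fun x => √(1 - x)) (𝓝[>] 0) (𝓝 1) := by
    have hc : Continuous fun x : ℝ => √(1 - x) := by fun_prop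
    simpa using (hc.continuousWithinAt (s := Ioi 0) (x := 0)).tendsto
  have hlim := harcsin.sub ((hlog.div hsqrt one_ne_zero).const_mul 2)
  rw [div_one, mul_zero, sub_zero] at hlim
  refine hlim.congr fun x => ?_
  rw [logCfunPrimitive, Pi.div_apply]
  ring

theorem tendsto_logCfunPrimitive_nhdsLT_one :
    Tendsto logCfunPrimitive (𝓝[<] 1) (𝓝 π) := by
  have harcsin : Tendsto (fun x => 2 * (arcsin √x - √x * √(1 - x))) (𝓝[<] 1) (𝓝 π) := by
    have hc : Continuous fun x => 2 * (arcsin √x - √x * √(1 - x)) := by fun_prop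
    simpa [mul_div_cancel₀] using (hc.continuousWithinAt (s := Iio 1) (x := 1)).tendsto
  have hpow : Tendsto (fun x : ℝ => x * √x) (𝓝[<] 1) (𝓝 1) := by
    have hc : Continuous fun x : ℝ => x * √x := by fun_prop
    simpa using (hc.continuousWithinAt (s := Iio 1) (x := 1)).tendsto
  have hlim := harcsin.sub ((hpow.mul tendsto_log_div_sqrt_one_sub_nhdsLT_one).const_mul 2)
  rw [mul_zero, mul_zero, sub_zero] at hlim
  refine hlim.congr fun x => ?_
  rw [logCfunPrimitive]
  ring

theorem integral_log_cfun :
    (1 / (2 * Real.sqrt π)) *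
        ∫ x in Set.Ioo (0 : ℝ) 1,
          (-Real.log x) * cfun x * (x * (1 - x)) ^ (-(3 / 2) : ℝ) =
      Real.sqrt π / 2 := by
  have hI : ∫ x in Ioo (0 : ℝ) 1, (-log x) * cfun x * (x * (1 - x)) ^ (-(3 / 2) : ℝ) = π - 0 :=
    integral_Ioo_of_hasDerivAt_of_nonneg zero_lt_one
      (fun x hx => hasDerivAt_logCfunPrimitive hx.1 hx.2)
      (fun x hx => neg_log_mul_cfun_mul_rpow_nonneg hx.1 hx.2)
      tendsto_logCfunPrimitive_nhdsGT_zero tendsto_logCfunPrimitive_nhdsLT_one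
  have hsqrt : √π * √π = π := Real.mul_self_sqrt pi_pos.le
  rw [hI, sub_zero]
  field_simp
  linarith
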